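/- Let M ∈ ℝ^{m×n} be full rank with m < n, p ∈ ℝ^m, B = {x ∈ ℝ^n : Mx = p}, and suppose A_s ∩ B is nonempty. Let x̄ ∈ A_s ∩ B with x̄ ≠ 0 and let 0 < δ < min{|x̄_j| : x̄_j ≠ 0}. Then the pair (A_s, B) is locally linearly regular on the closed ball B_{δ/2}(x̄): there exists κ > 0 such that dist(x, A_s ∩ B) ≤ κ · max(dist(x, A_s), dist(x, B)) for all x with ‖x − x̄‖ ≤ δ/2. -/

import Mathlib

/-!
Near `xb`, the `min s n` largest entries of `x` in absolute value include the support of `xb`,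
so the coordinate subspace `V_T` they span contains `xb`, lies in `A_s`, and is at least as close
to `x` as `A_s` is. The pair `(V_T, B)` consists of two affine subspaces through `xb`, and any
two linear subspaces `U, W` of a finite-dimensional space are linearly regular because
`E ⧸ (U ⊓ W) → (E ⧸ U) × (E ⧸ W)` is an injective linear map, hence antilipschitz. Taking the
largest of the finitely many constants over all `T` gives `κ`.
-/

/-- Number of nonzero entries of a vector (the ℓ₀-"norm"). -/
noncomputable def sparsity {n : ℕ} (x : EuclideanSpace ℝ (Fin n)) : ℕ :=
  (Finset.univ.filter (fun i => x i ≠ 0)).card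

/-- `A_s`, the set of vectors with at most `s` nonzero entries. -/
def Asp (n s : ℕ) : Set (EuclideanSpace ℝ (Fin n)) := {x | sparsity x ≤ s}

/-- The affine constraint set `B = {x | Mx = p}`. -/
def Bset {m n : ℕ} (M : Matrix (Fin m) (Fin n) ℝ) (p : Fin m → ℝ) :
    Set (EuclideanSpace ℝ (Fin n)) := {x | M.mulVec x = p}

open Metric Finset

theorem infDist_image_add_right {E : Type*} [SeminormedAddCommGroup E] (s : Set E) (a x : E) :
    infDist x ((· + a) '' s) = infDist (x - a) s := by
  simpa using infDist_image (x := x - a) (t := s) (IsometryEquiv.addRight a).isometry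

section LinearRegularity

variable {𝕜 E : Type*} [NontriviallyNormedField 𝕜] [CompleteSpace 𝕜]
  [NormedAddCommGroup E] [NormedSpace 𝕜 E] [FiniteDimensional 𝕜 E]

theorem Submodule.exists_infDist_inf_le_mul_max (U W : Submodule 𝕜 E) :
    ∃ κ > (0 : ℝ), ∀ x : E, infDist x ((U ⊓ W : Submodule 𝕜 E) : Set E) ≤
      κ * max (infDist x U) (infDist x W) := by
  have (V : Submodule 𝕜 E) : IsClosed (V : Set E) := V.closed_of_finiteDimensional
  have hnorm (V : Submodule 𝕜 E) (x : E) : ‖V.mkQ x‖ = infDist x V :=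
    QuotientAddGroup.norm_mk (S := V.toAddSubgroup) x
  have hker : LinearMap.ker (U.mkQ.prod W.mkQ) = U ⊓ W := by simp [LinearMap.ker_prod]
  set f : E ⧸ (U ⊓ W) →ₗ[𝕜] (E ⧸ U) × (E ⧸ W) := (U ⊓ W).liftQ _ hker.ge
  obtain ⟨K, hK, hfK⟩ := f.exists_antilipschitzWith ((U ⊓ W).ker_liftQ_eq_bot _ _ hker.le)
  refine ⟨K, hK, fun x => ?_⟩
  have h := ZeroHomClass.bound_of_antilipschitz f hfK ((U ⊓ W).mkQ x)
  rwa [hnorm, show f ((U ⊓ W).mkQ x) = (U.mkQ x, W.mkQ x) from rfl, Prod.norm_mk, hnorm,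
    hnorm] at h

theorem Submodule.exists_infDist_inter_image_add_right_le (U W : Submodule 𝕜 E) (a : E) :
    ∃ κ > (0 : ℝ), ∀ x : E, infDist x ((· + a) '' U ∩ (· + a) '' W) ≤
      κ * max (infDist x ((· + a) '' U)) (infDist x ((· + a) '' W)) := by
  obtain ⟨κ, hκ, hreg⟩ := U.exists_infDist_inf_le_mul_max W
  refine ⟨κ, hκ, fun x => ?_⟩
  rw [← Set.image_inter (add_left_injective a), infDist_image_add_right, infDist_image_add_right,
    infDist_image_add_right, ← Submodule.coe_inf]
  exact hreg (x - a)

end LinearRegularity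

theorem Submodule.image_add_right_of_mem {R M : Type*} [Ring R] [AddCommGroup M] [Module R M]
    (U : Submodule R M) {a : M} (ha : a ∈ U) : (· + a) '' (U : Set M) = U := by
  ext z
  simp [Set.image_add_right, U.add_mem_iff_left (U.neg_mem ha)]

theorem Bset_eq_image_add_right {m n : ℕ} {M : Matrix (Fin m) (Fin n) ℝ} {p : Fin m → ℝ}
    {xb : EuclideanSpace ℝ (Fin n)} (hxb : xb ∈ Bset M p) :
    Bset M p = (· + xb) '' (LinearMap.ker (Matrix.toLpLin 2 2 M) : Set _) := by
  have hxb' : M.mulVec xb = p := hxb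
  ext z
  simp only [Set.image_add_right, Set.mem_preimage, SetLike.mem_coe, LinearMap.mem_ker,
    Matrix.toLpLin_apply, WithLp.toLp_eq_zero, WithLp.ofLp_add, WithLp.ofLp_neg,
    Matrix.mulVec_add, Matrix.mulVec_neg]
  rw [← hxb', add_neg_eq_zero]
  rfl

section CoordinateSubspace

variable {ι : Type*}

def coordSubspace (T : Finset ι) : Submodule ℝ (EuclideanSpace ℝ ι) where
  carrier := {x | ∀ j ∉ T, x j = 0}
  add_mem' hx hy j hj := by simp [hx j hj, hy j hj]
  zero_mem' _ _ := rfl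
  smul_mem' c x hx j hj := by simp [hx j hj]

@[simp]
theorem mem_coordSubspace {T : Finset ι} {x : EuclideanSpace ℝ ι} :
    x ∈ coordSubspace T ↔ ∀ j ∉ T, x j = 0 :=
  Iff.rfl

variable [DecidableEq ι]

def truncate (T : Finset ι) (x : EuclideanSpace ℝ ι) : EuclideanSpace ℝ ι :=
  WithLp.toLp 2 fun j => if j ∈ T then x j else 0

theorem truncate_mem_coordSubspace (T : Finset ι) (x : EuclideanSpace ℝ ι) :
    truncate T x ∈ coordSubspace T := by
  simp +contextual [truncate]

variable [Fintype ι]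

theorem norm_sub_truncate_le {T : Finset ι} {x z : EuclideanSpace ℝ ι}
    (hz : z ∈ coordSubspace T) : ‖x - truncate T x‖ ≤ ‖x - z‖ := by
  simp only [EuclideanSpace.norm_eq]
  gcongr with j
  by_cases hj : j ∈ T
  · simp [truncate, hj]
  · simp [truncate, hj, mem_coordSubspace.mp hz j hj]

theorem norm_sub_truncate_sq (T : Finset ι) (x : EuclideanSpace ℝ ι) :
    ‖x - truncate T x‖ ^ 2 = ‖x‖ ^ 2 - ∑ j ∈ T, x j ^ 2 := by
  have hcoord (j : ι) : (x - truncate T x) j ^ 2 = x j ^ 2 - if j ∈ T then x j ^ 2 else 0 := by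
    by_cases hj : j ∈ T <;> simp [truncate, hj]
  simp only [EuclideanSpace.norm_sq_eq, Real.norm_eq_abs, sq_abs, hcoord, sum_sub_distrib,
    sum_ite_mem, univ_inter]

theorem infDist_coordSubspace (T : Finset ι) (x : EuclideanSpace ℝ ι) :
    infDist x (coordSubspace T) = ‖x - truncate T x‖ := by
  refine le_antisymm ?_ ((le_infDist ⟨0, (coordSubspace T).zero_mem⟩).2 fun z hz => ?_)
  · simpa [dist_eq_norm] using infDist_le_dist_of_mem (truncate_mem_coordSubspace T x)
  · exact dist_eq_norm x z ▸ norm_sub_truncate_le hz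

theorem infDist_coordSubspace_le_of_sum_le {T T' : Finset ι} {x : EuclideanSpace ℝ ι}
    (h : ∑ j ∈ T', x j ^ 2 ≤ ∑ j ∈ T, x j ^ 2) :
    infDist x (coordSubspace T) ≤ infDist x (coordSubspace T') := by
  rw [infDist_coordSubspace, infDist_coordSubspace, ← sq_le_sq₀ (norm_nonneg _) (norm_nonneg _),
    norm_sub_truncate_sq, norm_sub_truncate_sq]
  linarith

end CoordinateSubspace

theorem le_of_mem_of_notMem_of_forall_sum_le {ι : Type*} [DecidableEq ι] {g : ι → ℝ}
    {T : Finset ι} (hT : ∀ T' : Finset ι, #T' = #T → ∑ j ∈ T', g j ≤ ∑ j ∈ T, g j)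
    {i j : ι} (hi : i ∈ T) (hj : j ∉ T) : g j ≤ g i := by
  have hj' : j ∉ T.erase i := fun h => hj (mem_of_mem_erase h)
  have hswap :=
    hT (insert j (T.erase i)) (by rw [card_insert_of_notMem hj', card_erase_add_one hi])
  rw [sum_insert hj', ← add_sum_erase T g hi] at hswap
  linarith

theorem sparsity_le {n : ℕ} (x : EuclideanSpace ℝ (Fin n)) : sparsity x ≤ n :=
  (card_le_univ _).trans_eq (Fintype.card_fin n)

theorem coordSubspace_subset_Asp {n s : ℕ} {T : Finset (Fin n)} (hT : #T ≤ s) :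
    (coordSubspace T : Set (EuclideanSpace ℝ (Fin n))) ⊆ Asp n s := by
  intro z hz
  refine (card_le_card fun j hj => ?_).trans hT
  by_contra hjT
  exact (mem_filter.1 hj).2 (hz j hjT)

theorem exists_coordSubspace_infDist_le_infDist_Asp {n : ℕ} (x : EuclideanSpace ℝ (Fin n))
    (s : ℕ) :
    ∃ T : Finset (Fin n), #T = min s n ∧ (∀ i ∈ T, ∀ j ∉ T, |x j| ≤ |x i|) ∧
      infDist x (coordSubspace T) ≤ infDist x (Asp n s) := by
  obtain ⟨T, hT, hTmax⟩ := exists_max_image (powersetCard (min s n) univ) (∑ j ∈ ·, x j ^ 2)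
    (powersetCard_nonempty.2 (by simp))
  have hTcard : #T = min s n := (mem_powersetCard.1 hT).2
  have hsum (T' : Finset (Fin n)) (hT' : #T' ≤ min s n) :
      ∑ j ∈ T', x j ^ 2 ≤ ∑ j ∈ T, x j ^ 2 := by
    obtain ⟨T'', hT'T'', -, hT''⟩ := exists_subsuperset_card_eq (subset_univ T') hT' (by simp)
    exact (sum_le_sum_of_subset_of_nonneg hT'T'' fun _ _ _ => sq_nonneg _).trans
      (hTmax T'' (mem_powersetCard.2 ⟨subset_univ _, hT''⟩))
  refine ⟨T, hTcard, fun i hi j hj => sq_le_sq.1 ?_, ?_⟩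
  · exact le_of_mem_of_notMem_of_forall_sum_le (fun T' hT' => hsum T' (hT' ▸ hTcard.le)) hi hj
  · refine (le_infDist ⟨0, by simp [Asp, sparsity]⟩).2 fun z hz => ?_
    set S : Finset (Fin n) := {j | z j ≠ 0}
    have hzS : z ∈ coordSubspace S := fun j hj => by simpa [S] using hj
    exact (infDist_coordSubspace_le_of_sum_le (hsum S (le_min hz (sparsity_le z)))).trans
      (infDist_le_dist_of_mem hzS)

/-- Entries of `x` on the support of `xb` exceed `δ / 2` in absolute value, all others are at
most `δ / 2`. -/
theorem mem_coordSubspace_of_norm_sub_le {ι : Type*} [Fintype ι] {x xb : EuclideanSpace ℝ ι}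
    {δ : ℝ} (hsmall : ∀ j, xb j ≠ 0 → δ < |xb j|) (hx : ‖x - xb‖ ≤ δ / 2) {T : Finset ι}
    (hT : ∀ i ∈ T, ∀ j ∉ T, |x j| ≤ |x i|) (hcard : #{j | xb j ≠ 0} ≤ #T) :
    xb ∈ coordSubspace T := by
  classical
  intro j hj
  by_contra hxbj
  have hcoord (k : ι) : |x k - xb k| ≤ δ / 2 := (PiLp.norm_apply_le (x - xb) k).trans hx
  obtain ⟨i, hiT, hi⟩ : ∃ i ∈ T, i ∉ ({k | xb k ≠ 0} : Finset ι).erase j :=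
    exists_mem_notMem_of_card_lt_card
      ((card_erase_lt_of_mem (by simpa using hxbj)).trans_le hcard)
  have hxbi : xb i = 0 := by
    by_contra h
    exact hi (mem_erase.2 ⟨fun hij => hj (hij ▸ hiT), by simpa using h⟩)
  have hxi : |x i| ≤ δ / 2 := by simpa [hxbi] using hcoord i
  have hxj : δ / 2 < |x j| := by
    linarith [hsmall j hxbj, hcoord j, abs_sub_abs_le_abs_sub (xb j) (x j),
      abs_sub_comm (x j) (xb j)]
  linarith [hT i hiT j hj]

theorem stmt7 {n m s : ℕ} (M : Matrix (Fin m) (Fin n) ℝ) (p : Fin m → ℝ)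
    (xb : EuclideanSpace ℝ (Fin n)) (hxb : xb ∈ Asp n s ∩ Bset M p)
    (δ : ℝ) (hsmall : ∀ j, xb j ≠ 0 → δ < |xb j|) :
    ∃ κ > (0:ℝ), ∀ x : EuclideanSpace ℝ (Fin n), ‖x - xb‖ ≤ δ / 2 →
      Metric.infDist x (Asp n s ∩ Bset M p) ≤
        κ * max (Metric.infDist x (Asp n s)) (Metric.infDist x (Bset M p)) := by
  choose κ hκ hreg using fun T : Finset (Fin n) =>
    (coordSubspace T).exists_infDist_inter_image_add_right_le
      (LinearMap.ker (Matrix.toLpLin 2 2 M)) xb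
  obtain ⟨κmax, hκmax⟩ := Finite.exists_le κ
  refine ⟨κmax, (hκ ∅).trans_le (hκmax ∅), fun x hx => ?_⟩
  obtain ⟨T, hTcard, hTtop, hTA⟩ := exists_coordSubspace_infDist_le_infDist_Asp x s
  have hxbT : xb ∈ coordSubspace T :=
    mem_coordSubspace_of_norm_sub_le hsmall hx hTtop (hTcard ▸ le_min hxb.1 (sparsity_le xb))
  have hsub : (coordSubspace T : Set _) ∩ Bset M p ⊆ Asp n s ∩ Bset M p :=
    Set.inter_subset_inter_left _ (coordSubspace_subset_Asp (hTcard ▸ min_le_left s n))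
  calc infDist x (Asp n s ∩ Bset M p)
      ≤ infDist x ((coordSubspace T : Set _) ∩ Bset M p) :=
        infDist_le_infDist_of_subset hsub ⟨xb, hxbT, hxb.2⟩
    _ ≤ κ T * max (infDist x (coordSubspace T)) (infDist x (Bset M p)) := by
        simpa only [(coordSubspace T).image_add_right_of_mem hxbT,
          ← Bset_eq_image_add_right hxb.2] using hreg T x
    _ ≤ κmax * max (infDist x (Asp n s)) (infDist x (Bset M p)) :=
        mul_le_mul (hκmax T) (max_le_max_right _ hTA) (le_max_of_le_left infDist_nonneg)
          (hκ ∅ |>.le.trans (hκmax ∅))
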